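/- arXiv:1508.01266 — 3 statements merged into one kernel-verified Lean document; each statement's English description precedes it below -/
import Mathlib

section
/- Let G be a connected nontrivial graph with a'(G) = Δ(G) > 1. Then for every d ≥ 1, a'(G^d) = d·Δ(G), where G^d is the d-fold cartesian power of G. -/
open SimpleGraph

/-- An edge colouring of `G` is proper if distinct edges sharing a vertex
receive distinct colours. -/
def IsProperEdgeColoring {V : Type*} {γ : Type*} (G : SimpleGraph V) (c : Sym2 V → γ) : Prop :=
  ∀ e₁ ∈ G.edgeSet, ∀ e₂ ∈ G.edgeSet, e₁ ≠ e₂ → (∃ v, v ∈ e₁ ∧ v ∈ e₂) → c e₁ ≠ c e₂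

/-- The subgraph of `G` formed by the union of the colour classes `a` and `b`. -/
def twoColourSubgraph {V : Type*} {γ : Type*} (G : SimpleGraph V) (c : Sym2 V → γ)
    (a b : γ) : SimpleGraph V where
  Adj x y := G.Adj x y ∧ (c s(x, y) = a ∨ c s(x, y) = b)
  symm := ⟨fun x y h => ⟨h.1.symm, by rw [Sym2.eq_swap]; exact h.2⟩⟩
  loopless := ⟨fun x h => G.loopless.irrefl x h.1⟩

/-- A proper edge colouring is acyclic if the union of any two colour classes
is a forest. -/
def IsAcyclicEdgeColoring {V : Type*} {γ : Type*} (G : SimpleGraph V) (c : Sym2 V → γ) : Prop :=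
  IsProperEdgeColoring G c ∧ ∀ a b : γ, (twoColourSubgraph G c a b).IsAcyclic

/-- The acyclic chromatic index `a'(G)`: the least number of colours in an
acyclic proper edge colouring of `G`. -/
noncomputable def acyclicChromaticIndex {V : Type*} (G : SimpleGraph V) : ℕ :=
  sInf { n | ∃ c : Sym2 V → Fin n, IsAcyclicEdgeColoring G c }

/-- The cartesian (box) product of a family of graphs: two tuples are adjacent
iff they differ in exactly one coordinate, and are adjacent there. -/
def piBoxProd {ι : Type*} {V : ι → Type*} (G : ∀ i, SimpleGraph (V i)) :
    SimpleGraph (∀ i, V i) where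
  Adj x y := ∃ i, (G i).Adj (x i) (y i) ∧ ∀ j, j ≠ i → x j = y j
  symm := ⟨fun x y => by
    rintro ⟨i, h, hj⟩
    exact ⟨i, h.symm, fun j hji => (hj j hji).symm⟩⟩
  loopless := ⟨fun x => by
    rintro ⟨i, h, -⟩
    exact (G i).loopless.irrefl _ h⟩

/-!
Lower bound: in a proper edge colouring of `G^d`, the constant vertex at a vertex of maximum
degree sees `d * Δ` distinct colours.

Upper bound: take an acyclic edge colouring `c` of `G` with `Δ ≥ 2` colours. Then `G` is not
`Δ`-regular, so, being connected, it has a proper vertex colouring `f` with `Δ` colours. Colour an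
edge of `G^d` changing coordinate `i` from `x` to `y` by `(i, c s(x i, y i) + ∑_{k > i} f (x k))`
in `Fin d × ℤ/Δ`. On a component of the subgraph of two colours `(i, a)`, `(i, b)` the shift is
constant, so projecting to coordinate `i` maps it into a two-coloured forest of `G`, injectively
on edges. For colours `(i, a)`, `(j, b)` with `i < j`, coordinate `j` moves along a single edge
`v₀ v₁` of `G`, so the `i`-edges project into the forest coloured `a - f v₀ - S`, `a - f v₁ - S`
for a constant `S`; since `f v₀ ≠ f v₁` they are again bridges, and the `j`-edges form a matching,
so there is no cycle either.
-/

open Finset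
namespace SimpleGraph

variable {V W : Type*} {H : SimpleGraph V} {K : SimpleGraph W}

lemma Reachable.map_of_invariant (φ : V → W) (P : V → Prop) {x y : V} (hPx : P x)
    (hP : ∀ u w, P u → H.Adj u w → P w)
    (hφ : ∀ u w, P u → H.Adj u w → φ u = φ w ∨ K.Adj (φ u) (φ w))
    (h : H.Reachable x y) : K.Reachable (φ x) (φ y) := by
  obtain ⟨p⟩ := h
  induction p with
  | nil => rfl
  | @cons u w _ hadj _ ih =>
    rcases hφ u w hPx hadj with heq | hK
    · exact heq ▸ ih (hP u w hPx hadj)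
    · exact hK.reachable.trans (ih (hP u w hPx hadj))

lemma IsBridge.of_map (φ : V → W) (P : V → Prop) {x y : V} (hK : K.IsBridge s(φ x, φ y))
    (hPx : P x) (hP : ∀ u w, P u → H.Adj u w → P w)
    (hφ : ∀ u w, P u → H.Adj u w → s(u, w) ≠ s(x, y) →
      φ u = φ w ∨ K.Adj (φ u) (φ w) ∧ s(φ u, φ w) ≠ s(φ x, φ y)) :
    H.IsBridge s(x, y) := by
  rw [isBridge_iff] at hK ⊢
  refine fun hr => hK (hr.map_of_invariant φ P hPx (fun u w hu huw => hP u w hu ?_) ?_)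
  · exact ((deleteEdges_adj ..).mp huw).1
  · intro u w hu huw
    rw [deleteEdges_adj, Set.mem_singleton_iff] at huw
    rcases hφ u w hu huw.1 huw.2 with heq | ⟨hadj, hne⟩
    · exact .inl heq
    · exact .inr ((deleteEdges_adj ..).mpr ⟨hadj, hne⟩)

lemma IsAcyclic.exists_degree_le_one [Fintype V] [Nonempty V] [DecidableRel H.Adj]
    (hH : H.IsAcyclic) : ∃ v, H.degree v ≤ 1 := by
  classical
  by_contra! hdeg
  obtain ⟨T, hHT, -, hT⟩ := (connected_top (V := V)).exists_isTree_le_of_le_of_isAcyclic le_top hH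
  have hcard : #H.edgeFinset + 1 ≤ Fintype.card V :=
    hT.card_edgeFinset ▸ Nat.add_le_add_right (card_le_card (edgeFinset_mono hHT)) 1
  have hsum : ∑ v : V, 2 ≤ ∑ v, H.degree v := sum_le_sum fun v _ => hdeg v
  rw [sum_degrees_eq_twice_card_edges, sum_const, card_univ, smul_eq_mul] at hsum
  omega

end SimpleGraph

section EdgeColoring

variable {V γ : Type*} {G H : SimpleGraph V} {c : Sym2 V → γ}

lemma isProperEdgeColoring_iff_injOn :
    IsProperEdgeColoring G c ↔ ∀ v, Set.InjOn (fun w => c s(v, w)) (G.neighborSet v) := by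
  refine ⟨fun hc v w hw w' hw' hcw => ?_, fun h e₁ he₁ e₂ he₂ hne ⟨v, hv₁, hv₂⟩ hce => ?_⟩
  · by_contra hne
    refine hc _ hw _ hw' (fun h => hne ?_) ⟨v, Sym2.mem_mk_left _ _, Sym2.mem_mk_left _ _⟩ hcw
    exact (Sym2.congr_right.mp h)
  · obtain ⟨w, rfl⟩ := Sym2.mem_iff_exists.mp hv₁
    obtain ⟨w', rfl⟩ := Sym2.mem_iff_exists.mp hv₂
    exact hne (congrArg _ (h v he₁ he₂ hce))

lemma IsProperEdgeColoring.eq_of_adj (hc : IsProperEdgeColoring G c) {v w w' : V}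
    (hw : G.Adj v w) (hw' : G.Adj v w') (h : c s(v, w) = c s(v, w')) : w = w' :=
  isProperEdgeColoring_iff_injOn.mp hc v hw hw' h

lemma IsProperEdgeColoring.mono (hc : IsProperEdgeColoring G c) (hle : H ≤ G) :
    IsProperEdgeColoring H c :=
  fun e₁ he₁ e₂ he₂ => hc e₁ (edgeSet_mono hle he₁) e₂ (edgeSet_mono hle he₂)

/-- Each colour class of a proper edge colouring is a matching. -/
lemma IsProperEdgeColoring.exists_closed_pair (hc : IsProperEdgeColoring G c) (β : γ) (v : V) :
    ∃ v', (v' = v ∨ G.Adj v v') ∧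
      ∀ z w, (z = v ∨ z = v') → G.Adj z w → c s(z, w) = β → w = v ∨ w = v' := by
  by_cases h : ∃ v', G.Adj v v' ∧ c s(v, v') = β
  · obtain ⟨v', hadj, hβ⟩ := h
    refine ⟨v', .inr hadj, ?_⟩
    rintro z w (rfl | rfl) hzw hcz
    · exact .inr (hc.eq_of_adj hzw hadj (hcz.trans hβ.symm))
    · exact .inl (hc.eq_of_adj hzw hadj.symm (hcz.trans (Sym2.eq_swap ▸ hβ).symm))
  · refine ⟨v, .inl rfl, ?_⟩
    rintro z w (rfl | rfl) hzw hcz <;> exact absurd ⟨w, hzw, hcz⟩ h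

/-- A cycle has two consecutive edges, which cannot both lie in the matching `c⁻¹ β`. -/
lemma IsProperEdgeColoring.isAcyclic_of_isBridge (hc : IsProperEdgeColoring G c) (β : γ)
    (hbridge : ∀ e ∈ G.edgeSet, c e ≠ β → G.IsBridge e) : G.IsAcyclic := by
  intro v p hp
  cases p with
  | nil => exact hp.not_nil Walk.Nil.nil
  | @cons _ u _ h₁ q =>
    cases q with
    | nil => exact absurd hp.three_le_length (by simp)
    | @cons _ w _ h₂ r =>
      have hne : s(v, u) ≠ s(u, w) := by
        have := hp.edges_nodup
        simp only [Walk.edges_cons, List.nodup_cons, List.mem_cons] at this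
        exact fun h => this.1 (.inl h)
      have hmem₁ : s(v, u) ∈ (Walk.cons h₁ (Walk.cons h₂ r)).edges := by simp
      have hmem₂ : s(u, w) ∈ (Walk.cons h₁ (Walk.cons h₂ r)).edges := by simp
      by_cases hβ : c s(v, u) = β
      · have hβ' : c s(u, w) ≠ β := fun h =>
          hc _ h₁ _ h₂ hne ⟨u, Sym2.mem_mk_right _ _, Sym2.mem_mk_left _ _⟩ (hβ.trans h.symm)
        exact (hbridge _ h₂ hβ').notMem_edges_of_isCycle hp hmem₂
      · exact (hbridge _ h₁ hβ).notMem_edges_of_isCycle hp hmem₁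

lemma twoColourSubgraph_le (a b : γ) : twoColourSubgraph G c a b ≤ G := fun _ _ h => h.1

lemma twoColourSubgraph_comm (a b : γ) : twoColourSubgraph G c a b = twoColourSubgraph G c b a := by
  ext x y
  exact and_congr_right fun _ => or_comm

lemma twoColourSubgraph_comp_equiv {δ : Type*} (e : γ ≃ δ) (a b : δ) :
    twoColourSubgraph G (e ∘ c) a b = twoColourSubgraph G c (e.symm a) (e.symm b) := by
  ext x y
  simp only [twoColourSubgraph, Function.comp_apply, ← Equiv.eq_symm_apply]

lemma IsAcyclicEdgeColoring.comp_equiv {δ : Type*} (hc : IsAcyclicEdgeColoring G c) (e : γ ≃ δ) :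
    IsAcyclicEdgeColoring G (e ∘ c) :=
  ⟨fun e₁ h₁ e₂ h₂ hne hv h => hc.1 e₁ h₁ e₂ h₂ hne hv (e.injective h),
    fun a b => twoColourSubgraph_comp_equiv e a b ▸ hc.2 _ _⟩

/-- Two colour classes of an injective colouring contain at most two edges, too few for a cycle. -/
lemma isAcyclicEdgeColoring_of_injective (hc : Function.Injective c) :
    IsAcyclicEdgeColoring G c := by
  classical
  refine ⟨fun e₁ _ e₂ _ hne _ h => hne (hc h), fun a b v p hp => ?_⟩
  have hsub : (p.edges.toFinset.image c) ⊆ {a, b} := by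
    intro x hx
    obtain ⟨e, he, rfl⟩ := mem_image.mp hx
    have := p.edges_subset_edgeSet (List.mem_toFinset.mp he)
    induction e with
    | _ y z => simpa [or_comm] using this.2
  have h₁ := card_le_card hsub
  rw [card_image_of_injective _ hc, List.toFinset_card_of_nodup hp.edges_nodup,
    Walk.length_edges] at h₁
  have h₂ := card_le_two (a := a) (b := b)
  have := hp.three_le_length
  omega

lemma exists_isAcyclicEdgeColoring_acyclicChromaticIndex [Finite V] (G : SimpleGraph V) :
    ∃ c : Sym2 V → Fin (acyclicChromaticIndex G), IsAcyclicEdgeColoring G c := by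
  have := Fintype.ofFinite V
  have hne : {n | ∃ c : Sym2 V → Fin n, IsAcyclicEdgeColoring G c}.Nonempty :=
    ⟨_, _, isAcyclicEdgeColoring_of_injective (Fintype.equivFin (Sym2 V)).injective⟩
  exact Nat.sInf_mem hne

lemma acyclicChromaticIndex_le {n : ℕ} {c : Sym2 V → Fin n} (hc : IsAcyclicEdgeColoring G c) :
    acyclicChromaticIndex G ≤ n :=
  Nat.sInf_le ⟨c, hc⟩

end EdgeColoring

section VertexColoring

variable {V : Type*} [Fintype V] {G : SimpleGraph V} [DecidableRel G.Adj]

/-- If every vertex had degree at least `k`, it would see all `k` colours, so the union of two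
colour classes would be a forest without leaves. -/
lemma IsAcyclicEdgeColoring.exists_degree_lt [Nonempty V] {k : ℕ} {c : Sym2 V → Fin k}
    (hc : IsAcyclicEdgeColoring G c) (hk : 2 ≤ k) : ∃ v, G.degree v < k := by
  classical
  by_contra! hdeg
  have hsurj (v : V) (β : Fin k) : ∃ w, G.Adj v w ∧ c s(v, w) = β := by
    have hinj : Set.InjOn (fun w => c s(v, w)) (G.neighborFinset v) := by
      simpa using isProperEdgeColoring_iff_injOn.mp hc.1 v
    have huniv : (G.neighborFinset v).image (fun w => c s(v, w)) = univ := by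
      refine eq_univ_of_card _ (le_antisymm (card_le_univ _) ?_)
      simpa [card_image_of_injOn hinj] using hdeg v
    obtain ⟨w, hw, hwβ⟩ := mem_image.mp (huniv ▸ mem_univ β)
    exact ⟨w, (G.mem_neighborFinset v w).mp hw, hwβ⟩
  set F := twoColourSubgraph G c ⟨0, by omega⟩ ⟨1, by omega⟩
  obtain ⟨v, hv⟩ := (hc.2 ⟨0, by omega⟩ ⟨1, by omega⟩).exists_degree_le_one (H := F)
  obtain ⟨w₀, hw₀, hc₀⟩ := hsurj v ⟨0, by omega⟩
  obtain ⟨w₁, hw₁, hc₁⟩ := hsurj v ⟨1, by omega⟩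
  have hne : w₀ ≠ w₁ := by
    rintro rfl
    simp [hc₀] at hc₁
  have hsub : {w₀, w₁} ⊆ F.neighborFinset v := by
    simp only [insert_subset_iff, singleton_subset_iff, mem_neighborFinset]
    exact ⟨⟨hw₀, .inl hc₀⟩, hw₁, .inr hc₁⟩
  have := card_le_card hsub
  rw [card_pair hne, card_neighborFinset_eq_degree] at this
  omega

lemma SimpleGraph.colorable_of_forall_exists_card_lt {k : ℕ} [NeZero k]
    (h : ∀ S : Finset V, S.Nonempty → ∃ v ∈ S, #{w ∈ S | G.Adj v w} < k) : G.Colorable k := by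
  classical
  suffices hS : ∀ S : Finset V, ∃ f : V → Fin k, ∀ x ∈ S, ∀ y ∈ S, G.Adj x y → f x ≠ f y by
    obtain ⟨f, hf⟩ := hS univ
    exact ⟨Coloring.mk f fun {x y} hxy => hf x (mem_univ x) y (mem_univ y) hxy⟩
  intro S
  induction S using Finset.strongInduction with
  | _ S ih =>
    obtain rfl | hS := S.eq_empty_or_nonempty
    · exact ⟨0, by simp⟩
    obtain ⟨v, hv, hdeg⟩ := h S hS
    obtain ⟨f, hf⟩ := ih (S.erase v) (erase_ssubset hv)
    have hcard : #(image f {w ∈ S.erase v | G.Adj v w}) < #(univ : Finset (Fin k)) :=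
      calc _ ≤ #{w ∈ S.erase v | G.Adj v w} := card_image_le
        _ ≤ #{w ∈ S | G.Adj v w} := card_le_card (filter_subset_filter _ (erase_subset v S))
        _ < k := hdeg
        _ = _ := (card_fin k).symm
    obtain ⟨β, -, hβ⟩ := exists_mem_notMem_of_card_lt_card hcard
    have hfree : ∀ y ∈ S, G.Adj v y → f y ≠ β := fun y hy hvy hfy =>
      hβ (mem_image.mpr ⟨y, by simp [hy, hvy, hvy.ne'], hfy⟩)
    refine ⟨Function.update f v β, fun x hx y hy hxy => ?_⟩
    simp only [Function.update_apply]
    split_ifs with hxv hyv hyv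
    · exact absurd (hxv.trans hyv.symm) hxy.ne
    · exact (hfree y hy (hxv ▸ hxy)).symm
    · exact hfree x hx (hyv ▸ hxy.symm)
    · exact hf x (mem_erase.mpr ⟨hxv, hx⟩) y (mem_erase.mpr ⟨hyv, hy⟩) hxy

/-- Every proper subset of a connected graph is left by an edge, whose inner end thus has fewer
than its degree neighbours inside; for the whole vertex set, use a vertex of small degree. -/
lemma SimpleGraph.Connected.colorable_of_degree_lt (hconn : G.Connected) {k : ℕ}
    (hmax : G.maxDegree ≤ k) {v : V} (hv : G.degree v < k) : G.Colorable k := by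
  classical
  have : NeZero k := ⟨by omega⟩
  refine colorable_of_forall_exists_card_lt fun S ⟨x, hx⟩ => ?_
  by_cases hS : S = univ
  · subst hS
    exact ⟨v, mem_univ v, by simpa [← card_neighborFinset_eq_degree, neighborFinset] using hv⟩
  obtain ⟨y, hy⟩ : ∃ y, y ∉ S := by simpa [eq_univ_iff_forall] using hS
  obtain ⟨⟨⟨u, w⟩, huw⟩, -, hu, hw⟩ :=
    (hconn.preconnected x y).some.exists_boundary_dart (S : Set V) hx hy
  refine ⟨u, hu, ?_⟩
  have hsub : {w' ∈ S | G.Adj u w'} ⊆ (G.neighborFinset u).erase w := fun z hz => by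
    simp only [mem_filter] at hz
    exact mem_erase.mpr ⟨fun h => hw (h ▸ hz.1), (G.mem_neighborFinset u z).mpr hz.2⟩
  have := card_le_card hsub
  rw [card_erase_of_mem ((G.mem_neighborFinset u w).mpr huw), card_neighborFinset_eq_degree] at this
  have := G.degree_le_maxDegree u
  have := G.degree_pos_iff_exists_adj u |>.mpr ⟨w, huw⟩
  omega

end VertexColoring

lemma Sym2.mk_eq_mk_of_eval_eq_of_forall_ne {ι β : Type*} {u w x y : ι → β} {i : ι}
    (hu : ∀ k, k ≠ i → u k = x k) (hw : ∀ k, k ≠ i → w k = x k) (hy : ∀ k, k ≠ i → y k = x k)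
    (h : s(u i, w i) = s(x i, y i)) : s(u, w) = s(x, y) := by
  classical
  have hupd : ∀ z : ι → β, (∀ k, k ≠ i → z k = x k) → Function.update x i (z i) = z :=
    fun z hz => (Function.eq_update_iff.mpr ⟨rfl, hz⟩).symm
  calc s(u, w) = Sym2.map (Function.update x i) s(u i, w i) := by
        rw [Sym2.map_mk, hupd u hu, hupd w hw]
    _ = s(x, y) := by rw [h, Sym2.map_mk, hupd x fun _ _ => rfl, hupd y hy]

section BoxPower

variable {α : Type*} {d Δ : ℕ} [NeZero Δ]

def coordShift (f : α → Fin Δ) (i : Fin d) (x : Fin d → α) : Fin Δ :=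
  ∑ k ∈ Ioi i, f (x k)

lemma coordShift_congr (f : α → Fin Δ) {i : Fin d} {x y : Fin d → α}
    (h : ∀ k, i < k → x k = y k) : coordShift f i x = coordShift f i y :=
  sum_congr rfl fun k hk => by rw [h k (mem_Ioi.mp hk)]

lemma coordShift_eq_add (f : α → Fin Δ) {i j : Fin d} (hij : i < j) (x : Fin d → α) :
    coordShift f i x = f (x j) + ∑ k ∈ (Ioi i).erase j, f (x k) :=
  (add_sum_erase _ _ (mem_Ioi.mpr hij)).symm

variable [NeZero d]

open Classical in
noncomputable def boxPowerColorAux (c : Sym2 α → Fin Δ) (f : α → Fin Δ) (x y : Fin d → α) :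
    Fin d × Fin Δ :=
  if h : ∃ i, x i ≠ y i ∧ ∀ j, j ≠ i → x j = y j then
    (h.choose, c s(x h.choose, y h.choose) + coordShift f h.choose x)
  else 0

lemma boxPowerColorAux_eq (c : Sym2 α → Fin Δ) (f : α → Fin Δ) {x y : Fin d → α} {i : Fin d}
    (hi : x i ≠ y i) (hoth : ∀ j, j ≠ i → x j = y j) :
    boxPowerColorAux c f x y = (i, c s(x i, y i) + coordShift f i x) := by
  have h : ∃ i, x i ≠ y i ∧ ∀ j, j ≠ i → x j = y j := ⟨i, hi, hoth⟩
  have hchoose : h.choose = i := by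
    by_contra hne
    exact h.choose_spec.1 (hoth _ hne)
  rw [boxPowerColorAux, dif_pos h, hchoose]

lemma boxPowerColorAux_comm (c : Sym2 α → Fin Δ) (f : α → Fin Δ) (x y : Fin d → α) :
    boxPowerColorAux c f x y = boxPowerColorAux c f y x := by
  by_cases h : ∃ i, x i ≠ y i ∧ ∀ j, j ≠ i → x j = y j
  · obtain ⟨i, hi, hoth⟩ := h
    rw [boxPowerColorAux_eq c f hi hoth,
      boxPowerColorAux_eq c f hi.symm fun j hj => (hoth j hj).symm, Sym2.eq_swap,
      coordShift_congr f fun k hk => hoth k hk.ne']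
  · have h' : ¬ ∃ i, y i ≠ x i ∧ ∀ j, j ≠ i → y j = x j := fun ⟨i, hi, hoth⟩ =>
      h ⟨i, hi.symm, fun j hj => (hoth j hj).symm⟩
    rw [boxPowerColorAux, boxPowerColorAux, dif_neg h, dif_neg h']

noncomputable def boxPowerEdgeColoring (c : Sym2 α → Fin Δ) (f : α → Fin Δ) :
    Sym2 (Fin d → α) → Fin d × Fin Δ :=
  Sym2.lift ⟨boxPowerColorAux c f, boxPowerColorAux_comm c f⟩

variable {G : SimpleGraph α} {c : Sym2 α → Fin Δ} {f : α → Fin Δ}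

lemma boxPowerEdgeColoring_of_adj {x y : Fin d → α}
    (h : (piBoxProd fun _ : Fin d => G).Adj x y) :
    ∃ i, G.Adj (x i) (y i) ∧ (∀ j, j ≠ i → x j = y j) ∧
      boxPowerEdgeColoring c f s(x, y) = (i, c s(x i, y i) + coordShift f i x) := by
  obtain ⟨i, hadj, hoth⟩ := h
  exact ⟨i, hadj, hoth, boxPowerColorAux_eq c f hadj.ne hoth⟩

lemma IsProperEdgeColoring.boxPower (hc : IsProperEdgeColoring G c) :
    IsProperEdgeColoring (piBoxProd fun _ : Fin d => G) (boxPowerEdgeColoring c f) := by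
  refine isProperEdgeColoring_iff_injOn.mpr fun v w hw w' hw' hcol => ?_
  obtain ⟨i, hadj, hoth, hC⟩ := boxPowerEdgeColoring_of_adj (c := c) (f := f) hw
  obtain ⟨i', hadj', hoth', hC'⟩ := boxPowerEdgeColoring_of_adj (c := c) (f := f) hw'
  simp only [hC, hC', Prod.mk.injEq] at hcol
  obtain ⟨rfl, hcol⟩ := hcol
  have hwi : w i = w' i := hc.eq_of_adj hadj hadj' (add_right_cancel hcol)
  funext k
  by_cases hk : k = i
  · exact hk ▸ hwi
  · rw [← hoth k hk, ← hoth' k hk]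

lemma boxPower_twoColourSubgraph_adj {i j : Fin d} {a b : Fin Δ} {u w : Fin d → α}
    (huw : (twoColourSubgraph (piBoxProd fun _ : Fin d => G) (boxPowerEdgeColoring c f) (i, a)
      (j, b)).Adj u w) :
    (G.Adj (u i) (w i) ∧ (∀ k, k ≠ i → u k = w k) ∧ c s(u i, w i) + coordShift f i u = a) ∨
    (G.Adj (u j) (w j) ∧ (∀ k, k ≠ j → u k = w k) ∧ c s(u j, w j) + coordShift f j u = b) := by
  obtain ⟨huw, hcol⟩ := huw
  obtain ⟨k, hadj, hoth, hC⟩ := boxPowerEdgeColoring_of_adj (c := c) (f := f) huw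
  simp only [hC, Prod.mk.injEq] at hcol
  rcases hcol with ⟨rfl, hcol⟩ | ⟨rfl, hcol⟩
  exacts [.inl ⟨hadj, hoth, hcol⟩, .inr ⟨hadj, hoth, hcol⟩]

lemma IsAcyclicEdgeColoring.isAcyclic_boxPower_twoColourSubgraph_same
    (hc : IsAcyclicEdgeColoring G c) (i : Fin d) (a b : Fin Δ) :
    (twoColourSubgraph (piBoxProd fun _ : Fin d => G) (boxPowerEdgeColoring c f) (i, a)
      (i, b)).IsAcyclic := by
  set H := twoColourSubgraph (piBoxProd fun _ : Fin d => G) (boxPowerEdgeColoring c f) (i, a) (i, b)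
  have decode {u w : Fin d → α} (huw : H.Adj u w) : G.Adj (u i) (w i) ∧
      (∀ k, k ≠ i → u k = w k) ∧ (c s(u i, w i) + coordShift f i u = a ∨
        c s(u i, w i) + coordShift f i u = b) := by
    rcases boxPower_twoColourSubgraph_adj huw with ⟨hadj, hoth, hcol⟩ | ⟨hadj, hoth, hcol⟩
    exacts [⟨hadj, hoth, .inl hcol⟩, ⟨hadj, hoth, .inr hcol⟩]
  refine isAcyclic_iff_forall_adj_isBridge.mpr fun x y hxy => ?_
  set P : (Fin d → α) → Prop := fun u => ∀ k, k ≠ i → u k = x k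
  have hP {u w : Fin d → α} (hu : P u) (huw : H.Adj u w) : P w :=
    fun k hk => ((decode huw).2.1 k hk).symm.trans (hu k hk)
  have hK {u w : Fin d → α} (hu : P u) (huw : H.Adj u w) :
      (twoColourSubgraph G c (a - coordShift f i x) (b - coordShift f i x)).Adj (u i) (w i) := by
    obtain ⟨hadj, -, hcol⟩ := decode huw
    rw [coordShift_congr f fun k hk => hu k hk.ne'] at hcol
    exact ⟨hadj, hcol.imp eq_sub_of_add_eq eq_sub_of_add_eq⟩
  refine IsBridge.of_map (· i) P (isAcyclic_iff_forall_adj_isBridge.mp (hc.2 _ _)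
    (hK (fun _ _ => rfl) hxy)) (fun _ _ => rfl) (fun u w hu huw => hP hu huw) ?_
  intro u w hu huw hne
  refine .inr ⟨hK hu huw, fun h => hne ?_⟩
  exact Sym2.mk_eq_mk_of_eval_eq_of_forall_ne hu (hP hu huw) (hP (fun _ _ => rfl) hxy) h

lemma boxPower_twoColourSubgraph_of_lt_invariant {i j : Fin d} (hij : i < j) {a b : Fin Δ}
    {x u w : Fin d → α} {v₁ : α}
    (hclosed : ∀ z z', (z = x j ∨ z = v₁) → G.Adj z z' → c s(z, z') = b - coordShift f j x →
      z' = x j ∨ z' = v₁)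
    (hu : (∀ k, k ≠ i → k ≠ j → u k = x k) ∧ (u j = x j ∨ u j = v₁))
    (huw : (twoColourSubgraph (piBoxProd fun _ : Fin d => G) (boxPowerEdgeColoring c f) (i, a)
      (j, b)).Adj u w) :
    (∀ k, k ≠ i → k ≠ j → w k = x k) ∧ (w j = x j ∨ w j = v₁) := by
  rcases boxPower_twoColourSubgraph_adj huw with ⟨-, hoth, -⟩ | ⟨hadj, hoth, hcol⟩
  · refine ⟨fun k hki hkj => (hoth k hki).symm.trans (hu.1 k hki hkj), ?_⟩
    rw [← hoth j hij.ne']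
    exact hu.2
  · refine ⟨fun k hki hkj => (hoth k hkj).symm.trans (hu.1 k hki hkj), hclosed _ _ hu.2 hadj ?_⟩
    rw [← coordShift_congr f fun k hk => hu.1 k (hij.trans hk).ne' hk.ne']
    exact eq_sub_of_add_eq hcol

/-- On the component of `x`, coordinate `j` takes only the values `x j` and its partner `v₁` in a
colour class, so an `(i, a)`-edge `s(u, w)` projects to coordinate `i` as an edge of `G` coloured
`a - (f (u j) + S)`, with `S` constant. As `f (x j) ≠ f v₁`, these edges lie in a two-coloured
forest of `G`, and only `s(x, y)` projects onto `s(x i, y i)`. -/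
lemma IsAcyclicEdgeColoring.isBridge_boxPower_twoColourSubgraph_of_lt
    (hc : IsAcyclicEdgeColoring G c) (hf : ∀ {u v}, G.Adj u v → f u ≠ f v) {i j : Fin d}
    (hij : i < j) (a b : Fin Δ) {x y : Fin d → α} (hGxy : G.Adj (x i) (y i))
    (hothxy : ∀ k, k ≠ i → x k = y k) (hcxy : c s(x i, y i) + coordShift f i x = a) :
    (twoColourSubgraph (piBoxProd fun _ : Fin d => G) (boxPowerEdgeColoring c f) (i, a)
      (j, b)).IsBridge s(x, y) := by
  obtain ⟨v₁, hv₁, hclosed⟩ := hc.1.exists_closed_pair (b - coordShift f j x) (x j)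
  set S := ∑ k ∈ (Ioi i).erase j, f (x k)
  set P : (Fin d → α) → Prop := fun u => (∀ k, k ≠ i → k ≠ j → u k = x k) ∧ (u j = x j ∨ u j = v₁)
  have hPx : P x := ⟨fun _ _ _ => rfl, .inl rfl⟩
  have hfj {u : Fin d → α} (hu : P u) (h : f (u j) = f (x j)) : u j = x j := by
    rcases hu.2, hv₁ with ⟨h' | h', hv | hv⟩
    exacts [h', h', h'.trans hv, absurd (h' ▸ h).symm (hf hv)]
  set K := twoColourSubgraph G c (a - (f (x j) + S)) (a - (f v₁ + S))
  have hK {u w : Fin d → α} (hu : P u) (hadj : G.Adj (u i) (w i))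
      (hcol : c s(u i, w i) + coordShift f i u = a) :
      c s(u i, w i) = a - (f (u j) + S) ∧ K.Adj (u i) (w i) := by
    have hshift : coordShift f i u = f (u j) + S := by
      rw [coordShift_eq_add f hij]
      refine congrArg _ (sum_congr rfl fun k hk => ?_)
      obtain ⟨hkj, hki⟩ := mem_erase.mp hk
      rw [hu.1 k (mem_Ioi.mp hki).ne' hkj]
    have hcu : c s(u i, w i) = a - (f (u j) + S) := hshift ▸ eq_sub_of_add_eq hcol
    refine ⟨hcu, hadj, ?_⟩
    rcases hu.2 with h | h <;> rw [hcu, h] <;> simp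
  obtain ⟨hcx, hKx⟩ := hK hPx hGxy hcxy
  refine IsBridge.of_map (· i) P (isAcyclic_iff_forall_adj_isBridge.mp (hc.2 _ _) hKx) hPx
    (fun u w hu huw => boxPower_twoColourSubgraph_of_lt_invariant hij hclosed hu huw) ?_
  intro u w hu huw hne
  rcases boxPower_twoColourSubgraph_adj huw with ⟨hadj, hoth, hcol⟩ | ⟨-, hoth, -⟩
  · obtain ⟨hcu, hKu⟩ := hK hu hadj hcol
    refine .inr ⟨hKu, fun h => hne ?_⟩
    have huj : u j = x j := hfj hu (add_right_cancel (sub_right_injective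
      (hcu.symm.trans ((congrArg c h).trans hcx))))
    have hu' : ∀ k, k ≠ i → u k = x k := fun k hki => by
      by_cases hkj : k = j
      exacts [hkj ▸ huj, hu.1 k hki hkj]
    exact Sym2.mk_eq_mk_of_eval_eq_of_forall_ne hu' (fun k hk => (hoth k hk).symm.trans (hu' k hk))
      (fun k hk => (hothxy k hk).symm) h
  · exact .inl (hoth i hij.ne)

lemma IsAcyclicEdgeColoring.isAcyclic_boxPower_twoColourSubgraph_of_lt
    (hc : IsAcyclicEdgeColoring G c) (hf : ∀ {u v}, G.Adj u v → f u ≠ f v) {i j : Fin d}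
    (hij : i < j) (a b : Fin Δ) :
    (twoColourSubgraph (piBoxProd fun _ : Fin d => G) (boxPowerEdgeColoring c f) (i, a)
      (j, b)).IsAcyclic := by
  refine ((hc.1.boxPower (f := f)).mono (twoColourSubgraph_le _ _)).isAcyclic_of_isBridge (j, b) ?_
  intro e he heb
  induction e with | _ x y =>
  obtain ⟨k, hGxy, hothxy, hC⟩ := boxPowerEdgeColoring_of_adj (c := c) (f := f) he.1
  have hcxy := he.2.resolve_right heb
  simp only [hC, Prod.mk.injEq] at hcxy
  obtain ⟨rfl, hcxy⟩ := hcxy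
  exact hc.isBridge_boxPower_twoColourSubgraph_of_lt hf hij a b hGxy hothxy hcxy

lemma IsAcyclicEdgeColoring.boxPower (hc : IsAcyclicEdgeColoring G c)
    (hf : ∀ {u v}, G.Adj u v → f u ≠ f v) :
    IsAcyclicEdgeColoring (piBoxProd fun _ : Fin d => G) (boxPowerEdgeColoring c f) := by
  refine ⟨hc.1.boxPower, ?_⟩
  rintro ⟨i, a⟩ ⟨j, b⟩
  rcases lt_trichotomy i j with h | rfl | h
  · exact hc.isAcyclic_boxPower_twoColourSubgraph_of_lt hf h a b
  · exact hc.isAcyclic_boxPower_twoColourSubgraph_same i a b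
  · rw [twoColourSubgraph_comm]
    exact hc.isAcyclic_boxPower_twoColourSubgraph_of_lt hf h b a

end BoxPower

lemma IsProperEdgeColoring.mul_degree_le_of_boxPower {α : Type*} [Fintype α] {G : SimpleGraph α}
    [DecidableRel G.Adj] {d n : ℕ} {C : Sym2 (Fin d → α) → Fin n}
    (hC : IsProperEdgeColoring (piBoxProd fun _ : Fin d => G) C) (v : α) : d * G.degree v ≤ n := by
  classical
  set x : Fin d → α := fun _ => v
  set g : Fin d × G.neighborFinset v → Fin d → α := fun p => Function.update x p.1 p.2
  have hadj (p : Fin d × G.neighborFinset v) : (piBoxProd fun _ : Fin d => G).Adj x (g p) :=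
    ⟨p.1, by simpa [g] using (G.mem_neighborFinset v _).mp p.2.2, fun k hk => by simp [g, hk]⟩
  have hg : Function.Injective g := by
    rintro ⟨i, u, hu⟩ ⟨i', u', hu'⟩ h
    obtain rfl : i = i' := by
      by_contra hne
      have := congrFun h i
      simp only [g, Function.update_self, Function.update_of_ne hne] at this
      exact (G.mem_neighborFinset v u).mp hu |>.ne' this
    simpa [g] using congrFun h i
  have hinj : Function.Injective fun p => C s(x, g p) := fun p q h =>
    hg (isProperEdgeColoring_iff_injOn.mp hC x (hadj p) (hadj q) h)
  have := Fintype.card_le_of_injective _ hinj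
  rwa [Fintype.card_prod, Fintype.card_fin, Fintype.card_coe, card_neighborFinset_eq_degree,
    Fintype.card_fin] at this

theorem acyclicChromaticIndex_boxPower_general {α : Type*} [Fintype α]
    (G : SimpleGraph α) [DecidableRel G.Adj] (hconn : G.Connected)
    (heq : acyclicChromaticIndex G = G.maxDegree) (hgt : 1 < G.maxDegree)
    (d : ℕ) (hd : 1 ≤ d) :
    acyclicChromaticIndex (piBoxProd (fun _ : Fin d => G)) = d * G.maxDegree := by
  have : NeZero G.maxDegree := ⟨by omega⟩
  have : NeZero d := ⟨by omega⟩
  have := hconn.nonempty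
  obtain ⟨c, hc⟩ : ∃ c : Sym2 α → Fin G.maxDegree, IsAcyclicEdgeColoring G c :=
    heq ▸ exists_isAcyclicEdgeColoring_acyclicChromaticIndex G
  obtain ⟨v, hv⟩ := hc.exists_degree_lt hgt
  obtain ⟨f⟩ := hconn.colorable_of_degree_lt le_rfl hv
  have hupper := (hc.boxPower (d := d) f.valid).comp_equiv finProdFinEquiv
  obtain ⟨w, hw⟩ := G.exists_maximal_degree_vertex
  refine le_antisymm (acyclicChromaticIndex_le hupper) (le_csInf ⟨_, _, hupper⟩ ?_)
  rintro n ⟨C, hC⟩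
  exact hw ▸ hC.1.mul_degree_le_of_boxPower w

/-- For a connected nontrivial finite graph `G` with `a'(G) = Δ(G) > 1`,
the `d`-fold cartesian power `G^d` satisfies `a'(G^d) = d · Δ(G)` for all `d ≥ 1`. -/
theorem acyclicChromaticIndex_boxPower {α : Type*} [Fintype α] [Nontrivial α]
    (G : SimpleGraph α) [DecidableRel G.Adj] (hconn : G.Connected)
    (heq : acyclicChromaticIndex G = G.maxDegree) (hgt : 1 < G.maxDegree)
    (d : ℕ) (hd : 1 ≤ d) :
    acyclicChromaticIndex (piBoxProd (fun _ : Fin d => G)) = d * G.maxDegree :=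
  acyclicChromaticIndex_boxPower_general G hconn heq hgt d hd
end

section
/- Let G and H be graphs with acyclic edge colourings X_G: E_G → {0,…,η−1} and X_H: E_H → {0',…,(β−1)'} using disjoint colour sets, let Y_H be a proper vertex colouring of H with colours {0,…,d−1} where d ≤ η, and define σ_i(j) = (j+i) mod η. Then the edge colouring X of G □ H defined by X(f_u) = X_H(f) for copies of H-edges and X(e_v) = σ_{Y_H(v)}(X_G(e)) for copies of G-edges is a proper edge colouring. -/
/-!
Two distinct edges of `G □ H` at a common vertex lie either in the same copy `G_v` of `G`, in
the same copy `H_u` of `H`, or one in each. In `G_v` the colouring is `X_G` followed by the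
bijection `σ_{Y_H(v)}`, in `H_u` it is `X_H`, and both are proper; edges of different kinds get
colours from disjoint sets.
-/

open SimpleGraph

theorem IsProperEdgeColoring.comp_injective {V γ δ : Type*} {G : SimpleGraph V}
    {c : Sym2 V → γ} (hc : IsProperEdgeColoring G c) {f : γ → δ} (hf : Function.Injective f) :
    IsProperEdgeColoring G (f ∘ c) :=
  fun e₁ he₁ e₂ he₂ hne hshare => hf.ne (hc e₁ he₁ e₂ he₂ hne hshare)

theorem IsProperEdgeColoring.ne_of_map {V W γ : Type*} {G : SimpleGraph V} {c : Sym2 V → γ}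
    (hc : IsProperEdgeColoring G c) {φ : V → W} (hφ : Function.Injective φ)
    {e₁ e₂ : Sym2 V} (he₁ : e₁ ∈ G.edgeSet) (he₂ : e₂ ∈ G.edgeSet)
    (hne : e₁.map φ ≠ e₂.map φ) (hshare : ∃ z, z ∈ e₁.map φ ∧ z ∈ e₂.map φ) :
    c e₁ ≠ c e₂ := by
  obtain ⟨z, hz₁, hz₂⟩ := hshare
  obtain ⟨x₁, hx₁, rfl⟩ := Sym2.mem_map.1 hz₁
  obtain ⟨x₂, hx₂, hx⟩ := Sym2.mem_map.1 hz₂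
  exact hc e₁ he₁ e₂ he₂ (ne_of_apply_ne _ hne) ⟨x₁, hx₁, hφ hx ▸ hx₂⟩

theorem Sym2.snd_eq_of_mem_map_mk {α β : Type*} {z : α × β} {e : Sym2 α} {v : β}
    (h : z ∈ e.map (·, v)) : z.2 = v := by
  obtain ⟨_, _, rfl⟩ := Sym2.mem_map.1 h
  rfl

theorem Sym2.fst_eq_of_mem_map_mk {α β : Type*} {z : α × β} {f : Sym2 β} {u : α}
    (h : z ∈ f.map (u, ·)) : z.1 = u := by
  obtain ⟨_, _, rfl⟩ := Sym2.mem_map.1 h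
  rfl

namespace SimpleGraph

variable {α β : Type*} {G : SimpleGraph α} {H : SimpleGraph β}

theorem mem_boxProd_edgeSet {e : Sym2 (α × β)} :
    e ∈ (G □ H).edgeSet ↔
      (∃ e' ∈ G.edgeSet, ∃ v, e = e'.map (·, v)) ∨ ∃ f ∈ H.edgeSet, ∃ u, e = f.map (u, ·) := by
  constructor
  · induction e using Sym2.inductionOn with
    | hf x y =>
      obtain ⟨x₁, x₂⟩ := x
      obtain ⟨y₁, y₂⟩ := y
      rintro (⟨hG, rfl : x₂ = y₂⟩ | ⟨hH, rfl : x₁ = y₁⟩)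
      · exact .inl ⟨s(x₁, y₁), hG, x₂, rfl⟩
      · exact .inr ⟨s(x₂, y₂), hH, x₁, rfl⟩
  · rintro (⟨e', he', v, rfl⟩ | ⟨f, hf, u, rfl⟩)
    · exact (boxProdLeft G H v).map_mem_edgeSet_iff.2 he'
    · exact (boxProdRight G H u).map_mem_edgeSet_iff.2 hf

theorem isProperEdgeColoring_boxProd {γ₁ γ₂ : Type*} {cG : β → Sym2 α → γ₁}
    {cH : α → Sym2 β → γ₂} (hcG : ∀ v, IsProperEdgeColoring G (cG v))
    (hcH : ∀ u, IsProperEdgeColoring H (cH u)) {X : Sym2 (α × β) → γ₁ ⊕ γ₂}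
    (hXG : ∀ e ∈ G.edgeSet, ∀ v, X (e.map (·, v)) = .inl (cG v e))
    (hXH : ∀ f ∈ H.edgeSet, ∀ u, X (f.map (u, ·)) = .inr (cH u f)) :
    IsProperEdgeColoring (G □ H) X := by
  intro x₁ hx₁ x₂ hx₂ hne hshare
  rcases mem_boxProd_edgeSet.1 hx₁ with ⟨e₁, he₁, v₁, rfl⟩ | ⟨f₁, hf₁, u₁, rfl⟩ <;>
    rcases mem_boxProd_edgeSet.1 hx₂ with ⟨e₂, he₂, v₂, rfl⟩ | ⟨f₂, hf₂, u₂, rfl⟩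
  · obtain rfl : v₁ = v₂ := by
      obtain ⟨z, hz₁, hz₂⟩ := hshare
      exact (Sym2.snd_eq_of_mem_map_mk hz₁).symm.trans (Sym2.snd_eq_of_mem_map_mk hz₂)
    rw [hXG e₁ he₁, hXG e₂ he₂, Ne, Sum.inl.injEq]
    exact (hcG v₁).ne_of_map (Prod.mk_left_injective v₁) he₁ he₂ hne hshare
  · simp [hXG e₁ he₁, hXH f₂ hf₂]
  · simp [hXH f₁ hf₁, hXG e₂ he₂]
  · obtain rfl : u₁ = u₂ := by
      obtain ⟨z, hz₁, hz₂⟩ := hshare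
      exact (Sym2.fst_eq_of_mem_map_mk hz₁).symm.trans (Sym2.fst_eq_of_mem_map_mk hz₂)
    rw [hXH f₁ hf₁, hXH f₂ hf₂, Ne, Sum.inr.injEq]
    exact (hcH u₁).ne_of_map (Prod.mk_right_injective u₁) hf₁ hf₂ hne hshare

end SimpleGraph

/-- Disjoint colour sets are modelled by a sum type, and the shift `σ_i` by adding `i` in
`Fin η`. -/
theorem productColoring_proper_general {α β : Type*} (G : SimpleGraph α) (H : SimpleGraph β)
    {η βc d : ℕ} (hd : d ≤ η)
    (cG : Sym2 α → Fin η) (cH : Sym2 β → Fin βc)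
    (hcG : IsAcyclicEdgeColoring G cG) (hcH : IsAcyclicEdgeColoring H cH)
    (Y : β → Fin d)
    (X : Sym2 (α × β) → Fin η ⊕ Fin βc)
    (hXH : ∀ (u : α) (v₁ v₂ : β), H.Adj v₁ v₂ →
      X s((u, v₁), (u, v₂)) = Sum.inr (cH s(v₁, v₂)))
    (hXG : ∀ (u₁ u₂ : α) (v : β), G.Adj u₁ u₂ →
      X s((u₁, v), (u₂, v)) = Sum.inl (cG s(u₁, u₂) + Fin.castLE hd (Y v))) :
    IsProperEdgeColoring (G □ H) X := by
  refine isProperEdgeColoring_boxProd (cG := fun v e => cG e + Fin.castLE hd (Y v))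
    (cH := fun _ => cH) (fun v => hcG.1.comp_injective (add_left_injective _)) (fun _ => hcH.1)
    (fun e he v => ?_) (fun f hf u => ?_)
  · induction e using Sym2.inductionOn with
    | hf u₁ u₂ => exact hXG u₁ u₂ v he
  · induction f using Sym2.inductionOn with
    | hf v₁ v₂ => exact hXH u v₁ v₂ hf

/-- The product colouring of `G □ H` (copies of `H`-edges coloured by `X_H`, the copy
`G_v` of `G` coloured by the `Y_H(v)`-th cyclic shift of `X_G`, with disjoint colour sets
modelled by a sum type) is a proper edge colouring. -/
theorem productColoring_proper {α β : Type*} (G : SimpleGraph α) (H : SimpleGraph β)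
    {η βc d : ℕ} [NeZero η] (hd : d ≤ η)
    (cG : Sym2 α → Fin η) (cH : Sym2 β → Fin βc)
    (hcG : IsAcyclicEdgeColoring G cG) (hcH : IsAcyclicEdgeColoring H cH)
    (Y : β → Fin d) (hY : ∀ v w : β, H.Adj v w → Y v ≠ Y w)
    (X : Sym2 (α × β) → Fin η ⊕ Fin βc)
    (hXH : ∀ (u : α) (v₁ v₂ : β), H.Adj v₁ v₂ →
      X s((u, v₁), (u, v₂)) = Sum.inr (cH s(v₁, v₂)))
    (hXG : ∀ (u₁ u₂ : α) (v : β), G.Adj u₁ u₂ →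
      X s((u₁, v), (u₂, v)) = Sum.inl (cG s(u₁, u₂) + Fin.castLE hd (Y v))) :
    IsProperEdgeColoring (G □ H) X :=
  productColoring_proper_general G H hd cG cH hcG hcH Y X hXH hXG
end

section
/- Let X be the product colouring of G □ H (copies of H-edges coloured by X_H, copies of G-edges in G_v coloured by σ_{Y_H(v)} ∘ X_G with colour sets of X_G and X_H disjoint). If C is a bichromatic cycle of G □ H under X using one colour a from the G-colours and one colour b from the H-colours, then C lies entirely within the union of two copies G_{v1} and G_{v2} for some edge {v1,v2} of H, and the length of C is divisible by 4. -/
open SimpleGraph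

/-!
The product colouring is proper, so the two colours of a bichromatic cycle alternate all the way
round it; hence the cycle has even length and exactly half of its edges carry the `H`-colour `b`.
An edge of colour `a` keeps the `H`-coordinate, and since the `b`-edges of `H` form a matching, an
edge of colour `b` moves it along the unique `b`-edge `{v₁, v₂}` of `H` met by the cycle. So the
cycle stays inside `G_{v₁} ∪ G_{v₂}` and its `b`-edges are exactly its edges crossing between these
two copies, of which a closed walk has an even number.
-/

theorem List.IsChain.even_length_of_head?_ne_getLast? {l : List Bool}
    (hl : l.IsChain (· ≠ ·)) (h : l.head? ≠ l.getLast?) : Even l.length := by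
  by_contra hodd
  have hne : l ≠ [] := by rintro rfl; exact hodd Even.zero
  -- read from either end, an odd alternating list has `2 * count true = length ± 1`
  have hfwd := hl.two_mul_count_bool_eq_ite true
  have hbwd := (List.isChain_reverse.mpr (hl.imp fun _ _ => Ne.symm)).two_mul_count_bool_eq_ite true
  rw [List.count_reverse, List.length_reverse, List.head?_reverse] at hbwd
  rw [if_neg hodd, List.head?_eq_some_head hne] at hfwd
  rw [if_neg hodd, List.getLast?_eq_some_getLast hne] at hbwd
  rw [List.head?_eq_some_head hne, List.getLast?_eq_some_getLast hne] at h
  generalize l.head hne = x at *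
  generalize l.getLast hne = y at *
  cases x <;> cases y <;> simp at h hfwd hbwd <;> omega

namespace SimpleGraph.Walk

variable {V : Type*} {G : SimpleGraph V}

theorem even_countP_darts_iff (f : V → Bool) :
    ∀ {u v : V} (p : G.Walk u v), Even (p.darts.countP fun d => f d.fst != f d.snd) ↔ f u = f v
  | _, _, .nil => by simp
  | _, _, .cons h q => by
    rw [darts_cons, List.countP_cons, Nat.even_add, even_countP_darts_iff f q]
    cases f _ <;> cases f _ <;> cases f _ <;> simp

theorem iff_start_of_mem_support {P : V → Prop} :
    ∀ {u v : V} (p : G.Walk u v), (∀ d ∈ p.darts, P d.fst ↔ P d.snd) →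
      ∀ w ∈ p.support, P w ↔ P u
  | _, _, .nil, _, _, hw => by simp_all
  | _, _, .cons h q, hP, w, hw => by
    rw [support_cons, List.mem_cons] at hw
    rcases hw with rfl | hw
    · rfl
    · rw [darts_cons] at hP
      exact (iff_start_of_mem_support q (fun d hd => hP d (List.mem_cons_of_mem _ hd)) w hw).trans
        (hP _ List.mem_cons_self).symm

end SimpleGraph.Walk

section ProperEdgeColoring

variable {V γ : Type*} {G : SimpleGraph V} {c : Sym2 V → γ}

theorem isProperEdgeColoring_iff : IsProperEdgeColoring G c ↔
    ∀ ⦃z u w⦄, G.Adj z u → G.Adj z w → c s(z, u) = c s(z, w) → u = w := by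
  refine ⟨fun hc z u w hu hw huw => ?_, fun hc e₁ he₁ e₂ he₂ hne ⟨z, hz₁, hz₂⟩ => ?_⟩
  · by_contra hne
    exact hc _ hu _ hw (fun h => hne (Sym2.congr_right.mp h))
      ⟨z, Sym2.mem_mk_left _ _, Sym2.mem_mk_left _ _⟩ huw
  · obtain ⟨u, rfl⟩ := Sym2.mem_iff_exists.mp hz₁
    obtain ⟨w, rfl⟩ := Sym2.mem_iff_exists.mp hz₂
    exact fun huw => hne (congrArg _ (hc he₁ he₂ huw))

theorem IsProperEdgeColoring.eq_of_adj_of_adj (hc : IsProperEdgeColoring G c) {z u w : V}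
    (hu : G.Adj z u) (hw : G.Adj z w) (huw : c s(z, u) = c s(z, w)) : u = w :=
  isProperEdgeColoring_iff.mp hc hu hw huw

theorem IsProperEdgeColoring.mem_pair_iff_of_color_eq (hc : IsProperEdgeColoring G c)
    {s t v₁ v₂ : V} (hst : G.Adj s t) (hv : G.Adj v₁ v₂) (hcol : c s(s, t) = c s(v₁, v₂)) :
    (s = v₁ ∨ s = v₂) ↔ (t = v₁ ∨ t = v₂) := by
  have swap : ∀ x y : V, c s(x, y) = c s(y, x) := fun x y => congrArg c Sym2.eq_swap
  constructor
  · rintro (rfl | rfl)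
    · exact Or.inr (hc.eq_of_adj_of_adj hst hv hcol)
    · exact Or.inl (hc.eq_of_adj_of_adj hst hv.symm (hcol.trans (swap _ _)))
  · rintro (rfl | rfl)
    · exact Or.inr (hc.eq_of_adj_of_adj hst.symm hv ((swap _ _).trans hcol))
    · exact Or.inl (hc.eq_of_adj_of_adj hst.symm hv.symm ((swap _ _).trans (hcol.trans (swap _ _))))

theorem IsProperEdgeColoring.isChain_edges_of_isTrail (hc : IsProperEdgeColoring G c) :
    ∀ {u v : V} (p : G.Walk u v), p.IsTrail → p.edges.IsChain (fun e e' => c e ≠ c e')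
  | _, _, .nil, _ => by simp
  | _, _, .cons _ .nil, _ => by simp
  | _, _, .cons h (.cons h' q), hp => by
    rw [Walk.edges_cons, List.isChain_cons]
    refine ⟨?_, isChain_edges_of_isTrail hc _ hp.of_cons⟩
    simp only [Walk.edges_cons, List.head?_cons, Option.mem_some_iff]
    rintro _ rfl hcol
    have hne : s(_, _) ∉ (Walk.cons h' q).edges := ((Walk.isTrail_cons _ _).mp hp).2
    rw [Sym2.eq_swap] at hcol
    obtain rfl := hc.eq_of_adj_of_adj h.symm h' hcol
    simp [Sym2.eq_swap] at hne

theorem IsProperEdgeColoring.two_mul_countP_eq_length_of_isCycle [DecidableEq γ]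
    (hc : IsProperEdgeColoring G c) {x : V} {p : G.Walk x x} (hp : p.IsCycle) {a b : γ}
    (hab : ∀ e ∈ p.edges, c e = a ∨ c e = b) :
    2 * p.edges.countP (fun e => c e = b) = p.length := by
  have hbool : ∀ e ∈ p.edges, ∀ e' ∈ p.edges,
      c e ≠ c e' → decide (c e = b) ≠ decide (c e' = b) := by
    intro e he e' he' hne
    rcases hab e he with h | h <;> rcases hab e' he' with h' | h' <;> grind
  set l := p.edges.map fun e => decide (c e = b) with hl
  have hchain : l.IsChain (· ≠ ·) := List.isChain_map _ |>.mpr <|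
    (hc.isChain_edges_of_isTrail p hp.isTrail).imp_of_mem_imp fun e e' he he' => hbool e he e' he'
  have hnil : ¬p.Nil := hp.not_nil
  have hedges : p.edges ≠ [] := by simpa using hnil
  have hends : l.head? ≠ l.getLast? := by
    rw [hl, List.head?_map, List.getLast?_map, List.head?_eq_some_head hedges,
      List.getLast?_eq_some_getLast hedges, Walk.head_edges_eq_mk_start_snd,
      Walk.getLast_edges_eq_mk_penultimate_end]
    simp only [Option.map_some, ne_eq, Option.some.injEq]
    refine hbool _ (p.mk_start_snd_mem_edges hnil) _ (p.mk_penultimate_end_mem_edges hnil)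
      fun hcol => hp.snd_ne_penultimate ?_
    exact hc.eq_of_adj_of_adj (p.adj_snd hnil) (p.adj_penultimate hnil).symm
      (hcol.trans (congrArg c Sym2.eq_swap))
  have := hchain.two_mul_count_bool_of_even (hchain.even_length_of_head?_ne_getLast? hends) true
  simpa [hl, List.count, List.countP_map, Function.comp_def] using this

end ProperEdgeColoring

namespace SimpleGraph

section BoxProd

variable {α β A B : Type*} {G : SimpleGraph α} {H : SimpleGraph β}
  {cG : Sym2 α → A} {cH : Sym2 β → B} {shift : β → A} {X : Sym2 (α × β) → A ⊕ B}

theorem boxProd_snd_eq_of_color_eq_inl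
    (hXH : ∀ u v₁ v₂, H.Adj v₁ v₂ → X s((u, v₁), (u, v₂)) = Sum.inr (cH s(v₁, v₂)))
    {x y : α × β} (hxy : (G □ H).Adj x y) {i : A} (hi : X s(x, y) = Sum.inl i) : x.2 = y.2 := by
  obtain ⟨x₁, x₂⟩ := x
  obtain ⟨y₁, y₂⟩ := y
  rcases boxProd_adj.mp hxy with ⟨-, h⟩ | ⟨h, rfl⟩
  · exact h
  · simp [hXH _ _ _ h] at hi

variable [Add A]

theorem boxProd_adj_snd_of_color_eq_inr
    (hXH : ∀ u v₁ v₂, H.Adj v₁ v₂ → X s((u, v₁), (u, v₂)) = Sum.inr (cH s(v₁, v₂)))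
    (hXG : ∀ u₁ u₂ v, G.Adj u₁ u₂ → X s((u₁, v), (u₂, v)) = Sum.inl (cG s(u₁, u₂) + shift v))
    {x y : α × β} (hxy : (G □ H).Adj x y) {j : B} (hj : X s(x, y) = Sum.inr j) :
    H.Adj x.2 y.2 ∧ cH s(x.2, y.2) = j := by
  obtain ⟨x₁, x₂⟩ := x
  obtain ⟨y₁, y₂⟩ := y
  rcases boxProd_adj.mp hxy with ⟨h, rfl⟩ | ⟨h, rfl⟩
  · simp [hXG _ _ _ h] at hj
  · simpa [hXH _ _ _ h, h] using hj

theorem isProperEdgeColoring_boxProd_s16 [IsRightCancelAdd A]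
    (hcG : IsProperEdgeColoring G cG) (hcH : IsProperEdgeColoring H cH)
    (hXH : ∀ u v₁ v₂, H.Adj v₁ v₂ → X s((u, v₁), (u, v₂)) = Sum.inr (cH s(v₁, v₂)))
    (hXG : ∀ u₁ u₂ v, G.Adj u₁ u₂ → X s((u₁, v), (u₂, v)) = Sum.inl (cG s(u₁, u₂) + shift v)) :
    IsProperEdgeColoring (G □ H) X := by
  rw [isProperEdgeColoring_iff]
  rintro ⟨z₁, z₂⟩ ⟨u₁, u₂⟩ ⟨w₁, w₂⟩ hu hw huw
  rcases boxProd_adj.mp hu with ⟨hu, rfl⟩ | ⟨hu, rfl⟩ <;>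
    rcases boxProd_adj.mp hw with ⟨hw, rfl⟩ | ⟨hw, rfl⟩
  · rw [hXG _ _ _ hu, hXG _ _ _ hw, Sum.inl.injEq, add_left_inj] at huw
    simpa using hcG.eq_of_adj_of_adj hu hw huw
  · simp [hXG _ _ _ hu, hXH _ _ _ hw] at huw
  · simp [hXH _ _ _ hu, hXG _ _ _ hw] at huw
  · rw [hXH _ _ _ hu, hXH _ _ _ hw, Sum.inr.injEq] at huw
    simpa using hcH.eq_of_adj_of_adj hu hw huw

theorem boxProd_snd_mem_pair_iff (hcH : IsProperEdgeColoring H cH)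
    (hXH : ∀ u v₁ v₂, H.Adj v₁ v₂ → X s((u, v₁), (u, v₂)) = Sum.inr (cH s(v₁, v₂)))
    (hXG : ∀ u₁ u₂ v, G.Adj u₁ u₂ → X s((u₁, v), (u₂, v)) = Sum.inl (cG s(u₁, u₂) + shift v))
    {a : A} {b : B} {v₁ v₂ : β} (hv : H.Adj v₁ v₂) (hb : cH s(v₁, v₂) = b)
    {x y : α × β} (hxy : (G □ H).Adj x y) (hcol : X s(x, y) = Sum.inl a ∨ X s(x, y) = Sum.inr b) :
    (x.2 = v₁ ∨ x.2 = v₂) ↔ (y.2 = v₁ ∨ y.2 = v₂) := by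
  rcases hcol with ha | hb'
  · rw [boxProd_snd_eq_of_color_eq_inl hXH hxy ha]
  · obtain ⟨hH, hcol⟩ := boxProd_adj_snd_of_color_eq_inr hXH hXG hxy hb'
    exact hcH.mem_pair_iff_of_color_eq hH hv (hcol.trans hb.symm)

theorem boxProd_snd_mem_pair_of_mem_support (hcH : IsProperEdgeColoring H cH)
    (hXH : ∀ u v₁ v₂, H.Adj v₁ v₂ → X s((u, v₁), (u, v₂)) = Sum.inr (cH s(v₁, v₂)))
    (hXG : ∀ u₁ u₂ v, G.Adj u₁ u₂ → X s((u₁, v), (u₂, v)) = Sum.inl (cG s(u₁, u₂) + shift v))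
    {a : A} {b : B} {v₁ v₂ : β} (hv : H.Adj v₁ v₂) (hb : cH s(v₁, v₂) = b)
    {x y : α × β} (p : (G □ H).Walk x y) (hcol : ∀ e ∈ p.edges, X e = Sum.inl a ∨ X e = Sum.inr b)
    {z : α × β} (hz : z ∈ p.support) (hz₂ : z.2 = v₁ ∨ z.2 = v₂) :
    ∀ w ∈ p.support, w.2 = v₁ ∨ w.2 = v₂ := by
  have hstep : ∀ δ ∈ p.darts, (δ.fst.2 = v₁ ∨ δ.fst.2 = v₂) ↔ (δ.snd.2 = v₁ ∨ δ.snd.2 = v₂) :=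
    fun δ hδ => boxProd_snd_mem_pair_iff hcH hXH hXG hv hb δ.adj (hcol _ (List.mem_map_of_mem hδ))
  intro w hw
  exact (p.iff_start_of_mem_support (P := fun w => w.2 = v₁ ∨ w.2 = v₂) hstep w hw).mpr <|
    (p.iff_start_of_mem_support (P := fun w => w.2 = v₁ ∨ w.2 = v₂) hstep z hz).mp hz₂

theorem even_countP_edges_color_eq_inr [DecidableEq A] [DecidableEq B]
    (hXH : ∀ u v₁ v₂, H.Adj v₁ v₂ → X s((u, v₁), (u, v₂)) = Sum.inr (cH s(v₁, v₂)))
    (hXG : ∀ u₁ u₂ v, G.Adj u₁ u₂ → X s((u₁, v), (u₂, v)) = Sum.inl (cG s(u₁, u₂) + shift v))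
    {a : A} {b : B} {v₁ v₂ : β} (hv : v₁ ≠ v₂) {x : α × β} (p : (G □ H).Walk x x)
    (hcol : ∀ e ∈ p.edges, X e = Sum.inl a ∨ X e = Sum.inr b)
    (hsupp : ∀ y ∈ p.support, y.2 = v₁ ∨ y.2 = v₂) :
    Even (p.edges.countP fun e => X e = Sum.inr b) := by
  classical
  have hcross : ∀ d ∈ p.darts,
      decide (X d.edge = Sum.inr b) = (decide (d.fst.2 = v₁) != decide (d.snd.2 = v₁)) := by
    intro d hd
    have hfst := hsupp _ (p.dart_fst_mem_support_of_mem_darts hd)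
    have hsnd := hsupp _ (p.dart_snd_mem_support_of_mem_darts hd)
    rcases hcol _ (List.mem_map_of_mem hd) with ha | hb
    · have := boxProd_snd_eq_of_color_eq_inl hXH d.adj ha
      simp_all
    · have := (boxProd_adj_snd_of_color_eq_inr hXH hXG d.adj hb).1.ne
      grind
  rw [Walk.edges, List.countP_map, Function.comp_def, List.countP_congr fun d hd => by
    rw [hcross d hd]]
  exact (Walk.even_countP_darts_iff (fun w => decide (w.2 = v₁)) p).mpr rfl

end BoxProd

end SimpleGraph

theorem bichromatic_cycle_structure_general {α β : Type*} (G : SimpleGraph α) (H : SimpleGraph β)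
    {η βc d : ℕ} (hd : d ≤ η)
    (cG : Sym2 α → Fin η) (cH : Sym2 β → Fin βc)
    (hcG : IsAcyclicEdgeColoring G cG) (hcH : IsAcyclicEdgeColoring H cH)
    (Y : β → Fin d)
    (X : Sym2 (α × β) → Fin η ⊕ Fin βc)
    (hXH : ∀ (u : α) (v₁ v₂ : β), H.Adj v₁ v₂ →
      X s((u, v₁), (u, v₂)) = Sum.inr (cH s(v₁, v₂)))
    (hXG : ∀ (u₁ u₂ : α) (v : β), G.Adj u₁ u₂ →
      X s((u₁, v), (u₂, v)) = Sum.inl (cG s(u₁, u₂) + Fin.castLE hd (Y v)))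
    (a : Fin η) (b : Fin βc) :
    ∀ (x : α × β) (p : (G □ H).Walk x x), p.IsCycle →
      (∀ e ∈ p.edges, X e = Sum.inl a ∨ X e = Sum.inr b) →
      (∃ e ∈ p.edges, X e = Sum.inl a) → (∃ e ∈ p.edges, X e = Sum.inr b) →
      ∃ v₁ v₂ : β, H.Adj v₁ v₂ ∧ (∀ y ∈ p.support, y.2 = v₁ ∨ y.2 = v₂) ∧
        4 ∣ p.length := by
  intro x p hp hcol _ ⟨e, he, heb⟩
  obtain ⟨δ, hδ, rfl⟩ := List.mem_map.mp he
  obtain ⟨hv, hb⟩ := boxProd_adj_snd_of_color_eq_inr hXH hXG δ.adj heb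
  have hsupp : ∀ y ∈ p.support, y.2 = δ.fst.2 ∨ y.2 = δ.snd.2 :=
    boxProd_snd_mem_pair_of_mem_support hcH.1 hXH hXG hv hb p hcol
      (p.dart_fst_mem_support_of_mem_darts hδ) (Or.inl rfl)
  refine ⟨_, _, hv, hsupp, ?_⟩
  have hX := isProperEdgeColoring_boxProd_s16 hcG.1 hcH.1 hXH hXG
  have hlen := hX.two_mul_countP_eq_length_of_isCycle hp hcol
  obtain ⟨k, hk⟩ := even_countP_edges_color_eq_inr hXH hXG hv.ne p hcol hsupp
  exact ⟨k, by omega⟩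

/-- Under the product colouring of `G □ H`, a bichromatic cycle using one `G`-side colour
`a` and one `H`-side colour `b` lies entirely within the union of two copies `G_{v₁}` and
`G_{v₂}` for some edge `{v₁, v₂}` of `H`, and its length is divisible by 4. -/
theorem bichromatic_cycle_structure {α β : Type*} (G : SimpleGraph α) (H : SimpleGraph β)
    {η βc d : ℕ} [NeZero η] (hd : d ≤ η)
    (cG : Sym2 α → Fin η) (cH : Sym2 β → Fin βc)
    (hcG : IsAcyclicEdgeColoring G cG) (hcH : IsAcyclicEdgeColoring H cH)
    (Y : β → Fin d) (hY : ∀ v w : β, H.Adj v w → Y v ≠ Y w)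
    (X : Sym2 (α × β) → Fin η ⊕ Fin βc)
    (hXH : ∀ (u : α) (v₁ v₂ : β), H.Adj v₁ v₂ →
      X s((u, v₁), (u, v₂)) = Sum.inr (cH s(v₁, v₂)))
    (hXG : ∀ (u₁ u₂ : α) (v : β), G.Adj u₁ u₂ →
      X s((u₁, v), (u₂, v)) = Sum.inl (cG s(u₁, u₂) + Fin.castLE hd (Y v)))
    (a : Fin η) (b : Fin βc) :
    ∀ (x : α × β) (p : (G □ H).Walk x x), p.IsCycle →
      (∀ e ∈ p.edges, X e = Sum.inl a ∨ X e = Sum.inr b) →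
      (∃ e ∈ p.edges, X e = Sum.inl a) → (∃ e ∈ p.edges, X e = Sum.inr b) →
      ∃ v₁ v₂ : β, H.Adj v₁ v₂ ∧ (∀ y ∈ p.support, y.2 = v₁ ∨ y.2 = v₂) ∧
        4 ∣ p.length :=
  bichromatic_cycle_structure_general G H hd cG cH hcG hcH Y X hXH hXG a b
end
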